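/- In any associative algebra over a field of characteristic 0, for elements a,b,c,d: abcd = {a,b,c,d} + (1/2)({a,b,[c,d]} + {a,c,[b,d]} + {a,d,[b,c]} + {b,c,[a,d]} + {b,d,[a,c]} + {c,d,[a,b]}) + (1/4)({[a,b],[c,d]} + {[a,c],[b,d]} + {[a,d],[b,c]}) + (1/6)({a,[b,[c,d]]} + {a,[[b,c],d]} + {b,[a,[c,d]]} + {b,[[a,c],d]} + {c,[a,[b,d]]} + {c,[[a,b],d]} + {d,[a,[b,c]]} + {d,[[a,b],c]}) + (1/6)([[[c,d],b],a] - [[[b,d],c],a]) + (1/12)([[a,b],[c,d]] + [[a,c],[b,d]] + [[a,d],[b,c]]). -/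
import Mathlib


open scoped BigOperators

section PermHelpers

variable {A : Type*} [Ring A]

lemma perm1' (u : A) (w : Fin 1 → A) :
    (∑ σ : Equiv.Perm (Fin 1), u * w (σ 0)) = u * w 0 := by
  rw [Fintype.sum_unique]; rfl

lemma perm2' (u : A) (w : Fin 2 → A) :
    (∑ σ : Equiv.Perm (Fin 2), u * w (σ 0) * w (σ 1)) =
      u * w 0 * w 1 + u * w 1 * w 0 := by
  rw [← Equiv.sum_comp Equiv.Perm.decomposeFin.symm]
  simp only [show (1:Fin 2)=Fin.succ 0 from rfl,
    Equiv.Perm.decomposeFin_symm_apply_zero, Equiv.Perm.decomposeFin_symm_apply_succ,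
    Fintype.sum_prod_type, Fin.sum_univ_two]
  have h : ∀ (p : Fin 2) (z : A), (∑ σ : Equiv.Perm (Fin 1),
      u * w p * w (Equiv.swap 0 p (σ 0).succ)) = u * w p * w (Equiv.swap 0 p 1) := by
    intro p z
    rw [Fintype.sum_unique]; rfl
  rw [h 0 u, h (Fin.succ 0) u]
  simp [Equiv.swap_apply_def, Fin.ext_iff]

lemma perm3' (u : A) (w : Fin 3 → A) :
    (∑ σ : Equiv.Perm (Fin 3), u * w (σ 0) * w (σ 1) * w (σ 2)) =
      u * w 0 * w 1 * w 2 + u * w 0 * w 2 * w 1 + u * w 1 * w 0 * w 2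
      + u * w 1 * w 2 * w 0 + u * w 2 * w 0 * w 1 + u * w 2 * w 1 * w 0 := by
  rw [← Equiv.sum_comp Equiv.Perm.decomposeFin.symm]
  simp only [show (1:Fin 3)=Fin.succ 0 from rfl, show (2:Fin 3)=Fin.succ 1 from rfl,
    Equiv.Perm.decomposeFin_symm_apply_zero, Equiv.Perm.decomposeFin_symm_apply_succ,
    Fintype.sum_prod_type, Fin.sum_univ_three]
  rw [perm2' (u * w 0) (fun i => w (Equiv.swap 0 0 i.succ)),
      perm2' (u * w (Fin.succ 0)) (fun i => w (Equiv.swap 0 (Fin.succ 0) i.succ)),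
      perm2' (u * w (Fin.succ 1)) (fun i => w (Equiv.swap 0 (Fin.succ 1) i.succ))]
  simp only [Equiv.swap_apply_def]
  norm_num [Fin.ext_iff]
  abel

lemma perm4 (w : Fin 4 → A) :
    (∑ σ : Equiv.Perm (Fin 4), w (σ 0) * w (σ 1) * w (σ 2) * w (σ 3)) =
      w 0 * w 1 * w 2 * w 3 + w 0 * w 1 * w 3 * w 2 + w 0 * w 2 * w 1 * w 3
      + w 0 * w 2 * w 3 * w 1 + w 0 * w 3 * w 1 * w 2 + w 0 * w 3 * w 2 * w 1
      + w 1 * w 0 * w 2 * w 3 + w 1 * w 0 * w 3 * w 2 + w 1 * w 2 * w 0 * w 3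
      + w 1 * w 2 * w 3 * w 0 + w 1 * w 3 * w 0 * w 2 + w 1 * w 3 * w 2 * w 0
      + w 2 * w 0 * w 1 * w 3 + w 2 * w 0 * w 3 * w 1 + w 2 * w 1 * w 0 * w 3
      + w 2 * w 1 * w 3 * w 0 + w 2 * w 3 * w 0 * w 1 + w 2 * w 3 * w 1 * w 0
      + w 3 * w 0 * w 1 * w 2 + w 3 * w 0 * w 2 * w 1 + w 3 * w 1 * w 0 * w 2
      + w 3 * w 1 * w 2 * w 0 + w 3 * w 2 * w 0 * w 1 + w 3 * w 2 * w 1 * w 0 := by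
  rw [← Equiv.sum_comp Equiv.Perm.decomposeFin.symm]
  simp only [show (1:Fin 4)=Fin.succ 0 from rfl, show (2:Fin 4)=Fin.succ 1 from rfl,
    show (3:Fin 4)=Fin.succ 2 from rfl,
    Equiv.Perm.decomposeFin_symm_apply_zero, Equiv.Perm.decomposeFin_symm_apply_succ,
    Fintype.sum_prod_type, Fin.sum_univ_four]
  rw [perm3' (w 0) (fun i => w (Equiv.swap 0 0 i.succ)),
      perm3' (w (Fin.succ 0)) (fun i => w (Equiv.swap 0 (Fin.succ 0) i.succ)),
      perm3' (w (Fin.succ 1)) (fun i => w (Equiv.swap 0 (Fin.succ 1) i.succ)),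
      perm3' (w (Fin.succ 2)) (fun i => w (Equiv.swap 0 (Fin.succ 2) i.succ))]
  simp only [Equiv.swap_apply_def]
  norm_num [Fin.ext_iff]
  abel

end PermHelpers

/-- The symmetrization `{x,y} = (1/2)(xy + yx)` in a `k`-algebra. -/
noncomputable def sym2 (k : Type*) [Field k] {A : Type*} [Ring A] [Algebra k A]
    (x y : A) : A := (2 : k)⁻¹ • (x * y + y * x)

/-- The symmetrization `{x,y,z} = (1/6) Σ_{σ ∈ S₃} x_{σ(1)} x_{σ(2)} x_{σ(3)}`. -/
noncomputable def sym3 (k : Type*) [Field k] {A : Type*} [Ring A] [Algebra k A]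
    (x y z : A) : A :=
  (6 : k)⁻¹ • (x * y * z + x * z * y + y * x * z + y * z * x + z * x * y + z * y * x)

/-- The complete symmetrization `{a,b,c,d} = (1/24) Σ_{σ ∈ S₄} ⋯`. -/
noncomputable def sym4 (k : Type*) [Field k] {A : Type*} [Ring A] [Algebra k A]
    (a b c d : A) : A :=
  (24 : k)⁻¹ • ∑ σ : Equiv.Perm (Fin 4),
    ![a, b, c, d] (σ 0) * ![a, b, c, d] (σ 1) * ![a, b, c, d] (σ 2) * ![a, b, c, d] (σ 3)

set_option maxHeartbeats 4000000 in
/-- In any associative algebra over a field of characteristic `0`, for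
elements `a, b, c, d` the product `abcd` equals the displayed combination of complete
symmetrizations and iterated commutators. -/
theorem assoc_symmetrization_four {k : Type*} [Field k] [CharZero k]
    {A : Type*} [Ring A] [Algebra k A] (a b c d : A) :
    a * b * c * d =
      sym4 k a b c d
        + (2 : k)⁻¹ • (sym3 k a b ⁅c, d⁆ + sym3 k a c ⁅b, d⁆ + sym3 k a d ⁅b, c⁆
            + sym3 k b c ⁅a, d⁆ + sym3 k b d ⁅a, c⁆ + sym3 k c d ⁅a, b⁆)
        + (4 : k)⁻¹ • (sym2 k ⁅a, b⁆ ⁅c, d⁆ + sym2 k ⁅a, c⁆ ⁅b, d⁆ + sym2 k ⁅a, d⁆ ⁅b, c⁆)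
        + (6 : k)⁻¹ • (sym2 k a ⁅b, ⁅c, d⁆⁆ + sym2 k a ⁅⁅b, c⁆, d⁆
            + sym2 k b ⁅a, ⁅c, d⁆⁆ + sym2 k b ⁅⁅a, c⁆, d⁆
            + sym2 k c ⁅a, ⁅b, d⁆⁆ + sym2 k c ⁅⁅a, b⁆, d⁆
            + sym2 k d ⁅a, ⁅b, c⁆⁆ + sym2 k d ⁅⁅a, b⁆, c⁆)
        + (6 : k)⁻¹ • (⁅⁅⁅c, d⁆, b⁆, a⁆ - ⁅⁅⁅b, d⁆, c⁆, a⁆)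
        + (12 : k)⁻¹ • (⁅⁅a, b⁆, ⁅c, d⁆⁆ + ⁅⁅a, c⁆, ⁅b, d⁆⁆ + ⁅⁅a, d⁆, ⁅b, c⁆⁆) := by
  simp only [sym4, sym2, sym3, perm4, Ring.lie_def, Matrix.cons_val_zero, Matrix.cons_val_one,
    Matrix.head_cons, Matrix.cons_val_two, Matrix.tail_cons, Matrix.cons_val_three]
  simp only [mul_sub, sub_mul, mul_add, add_mul, smul_add, smul_sub, smul_smul, mul_assoc]
  match_scalars <;> field_simp <;> norm_num
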